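/- arXiv:2403.15071 — 5 statements merged into one kernel-verified Lean document; each statement's English description precedes it below -/
import Mathlib

section
/- Let ê₁, ê₂ : ℝ³ → ℝ³ be differentiable vector fields that are pointwise orthonormal, i.e. ê₁·ê₁ = ê₂·ê₂ = 1 and ê₁·ê₂ = 0 everywhere. For (r, θ) ∈ ℝ³ × ℝ define τ̂(r, θ) := −ê₁(r) sin θ − ê₂(r) cos θ and ρ̂(r, θ) := ê₁(r) cos θ − ê₂(r) sin θ. Then for every (r, θ): (i) ∂/∂θ [(∇τ̂)ρ̂](r, θ) = 0, i.e. the vector field (∇τ̂)ρ̂ is independent of the gyro-phase θ; and (ii) (∇τ̂)ρ̂ (r, θ) = ((∇ê₁)ê₂)(r). -/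
/-!
Differentiating the orthonormality relations gives `(∇ê₁)ê₁ = (∇ê₂)ê₂ = 0` and
`(∇ê₂)ê₁ = -(∇ê₁)ê₂`. Expanding `(∇τ̂)ρ̂` bilinearly, the diagonal terms vanish and the two
cross terms add up to `(sin² θ + cos² θ) (∇ê₁)ê₂`, which no longer depends on `θ`.
-/

open Matrix

/-- The vector `(∇S)v` at a point `r`, with `(∇S)_{ij} = ∂S_j/∂r_i`, i.e.
`((∇S)v)_i = ∑_j (∂S_j/∂r_i) v_j`. -/
noncomputable def gradVec (S : (Fin 3 → ℝ) → Fin 3 → ℝ) (r v : Fin 3 → ℝ) : Fin 3 → ℝ :=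
  fun i => ∑ j, fderiv ℝ S r (Pi.single i 1) j * v j

theorem HasDerivAt.dotProduct {𝕜 ι : Type*} [NontriviallyNormedField 𝕜] [Fintype ι]
    {f g : 𝕜 → ι → 𝕜} {f' g' : ι → 𝕜} {t : 𝕜}
    (hf : HasDerivAt f f' t) (hg : HasDerivAt g g' t) :
    HasDerivAt (fun s => f s ⬝ᵥ g s) (f' ⬝ᵥ g t + f t ⬝ᵥ g') t := by
  have := HasDerivAt.fun_sum (u := Finset.univ) fun i _ =>
    (hasDerivAt_pi.1 hf i).fun_mul (hasDerivAt_pi.1 hg i)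
  rwa [_root_.dotProduct, _root_.dotProduct, ← Finset.sum_add_distrib]

theorem fderiv_dotProduct_add_eq_zero_of_const {E ι : Type*} [NormedAddCommGroup E]
    [NormedSpace ℝ E] [Fintype ι] {f g : E → ι → ℝ} {x : E} {c : ℝ}
    (hf : DifferentiableAt ℝ f x) (hg : DifferentiableAt ℝ g x)
    (hfg : ∀ y, f y ⬝ᵥ g y = c) (v : E) :
    fderiv ℝ f x v ⬝ᵥ g x + f x ⬝ᵥ fderiv ℝ g x v = 0 := by
  have hline : HasDerivAt (fun t : ℝ => x + t • v) v 0 := by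
    simpa using ((hasDerivAt_id (0 : ℝ)).smul_const v).const_add x
  have hf' := hf.hasFDerivAt.comp_hasDerivAt_of_eq 0 hline (by simp)
  have hg' := hg.hasFDerivAt.comp_hasDerivAt_of_eq 0 hline (by simp)
  have hconst : HasDerivAt (fun t : ℝ => f (x + t • v) ⬝ᵥ g (x + t • v)) 0 0 := by
    simpa only [hfg] using hasDerivAt_const (0 : ℝ) c
  simpa using (hf'.dotProduct hg').unique hconst

section gradVec

variable {S T : (Fin 3 → ℝ) → Fin 3 → ℝ} {r : Fin 3 → ℝ}

theorem gradVec_apply (v : Fin 3 → ℝ) (i : Fin 3) :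
    gradVec S r v i = fderiv ℝ S r (Pi.single i 1) ⬝ᵥ v := rfl

theorem gradVec_sub_right (v w : Fin 3 → ℝ) :
    gradVec S r (v - w) = gradVec S r v - gradVec S r w := by
  ext i; simp [gradVec_apply, dotProduct_sub]

theorem gradVec_smul_right (a : ℝ) (v : Fin 3 → ℝ) :
    gradVec S r (a • v) = a • gradVec S r v := by
  ext i; simp [gradVec_apply, dotProduct_smul]

theorem gradVec_fun_sub (hS : DifferentiableAt ℝ S r) (hT : DifferentiableAt ℝ T r)
    (v : Fin 3 → ℝ) :
    gradVec (fun x => S x - T x) r v = gradVec S r v - gradVec T r v := by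
  ext i; simp [gradVec_apply, fderiv_fun_sub hS hT, sub_dotProduct]

theorem gradVec_fun_const_smul (hS : DifferentiableAt ℝ S r) (a : ℝ) (v : Fin 3 → ℝ) :
    gradVec (fun x => a • S x) r v = a • gradVec S r v := by
  ext i; simp [gradVec_apply, fderiv_fun_const_smul hS, smul_dotProduct]

end gradVec

theorem gradVec_add_gradVec_eq_zero_of_dotProduct_const {S T : (Fin 3 → ℝ) → Fin 3 → ℝ} {c : ℝ}
    (hS : Differentiable ℝ S) (hT : Differentiable ℝ T) (hST : ∀ x, S x ⬝ᵥ T x = c)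
    (r : Fin 3 → ℝ) : gradVec S r (T r) + gradVec T r (S r) = 0 := by
  ext i
  simpa [gradVec_apply, dotProduct_comm (S r)] using
    fderiv_dotProduct_add_eq_zero_of_const (hS r) (hT r) hST (Pi.single i 1)

theorem gradVec_self_eq_zero_of_dotProduct_self_const {S : (Fin 3 → ℝ) → Fin 3 → ℝ} {c : ℝ}
    (hS : Differentiable ℝ S) (hSS : ∀ x, S x ⬝ᵥ S x = c) (r : Fin 3 → ℝ) :
    gradVec S r (S r) = 0 := by
  have h := gradVec_add_gradVec_eq_zero_of_dotProduct_const hS hS hSS r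
  rwa [← two_smul ℝ, smul_eq_zero, or_iff_right two_ne_zero] at h

theorem gradVec_rotated_frame {e1 e2 : (Fin 3 → ℝ) → Fin 3 → ℝ}
    (hd1 : Differentiable ℝ e1) (hd2 : Differentiable ℝ e2)
    (h11 : ∀ r, e1 r ⬝ᵥ e1 r = 1) (h22 : ∀ r, e2 r ⬝ᵥ e2 r = 1)
    (h12 : ∀ r, e1 r ⬝ᵥ e2 r = 0) (r : Fin 3 → ℝ) (θ : ℝ) :
    gradVec (fun x => (-Real.sin θ) • e1 x - Real.cos θ • e2 x) r
      (Real.cos θ • e1 r - Real.sin θ • e2 r) = gradVec e1 r (e2 r) := by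
  have h21 : gradVec e2 r (e1 r) = -gradVec e1 r (e2 r) :=
    eq_neg_of_add_eq_zero_right (gradVec_add_gradVec_eq_zero_of_dotProduct_const hd1 hd2 h12 r)
  rw [gradVec_fun_sub ((hd1 r).fun_const_smul _) ((hd2 r).fun_const_smul _),
    gradVec_fun_const_smul (hd1 r), gradVec_fun_const_smul (hd2 r),
    gradVec_sub_right, gradVec_sub_right, gradVec_smul_right, gradVec_smul_right,
    gradVec_smul_right, gradVec_smul_right, h21,
    gradVec_self_eq_zero_of_dotProduct_self_const hd1 h11,
    gradVec_self_eq_zero_of_dotProduct_self_const hd2 h22]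
  linear_combination (norm := module) Real.sin_sq_add_cos_sq θ • gradVec e1 r (e2 r)

/-- for pointwise orthonormal differentiable fields `ê₁, ê₂`, the vector
field `(∇τ̂)ρ̂` is gyro-phase independent and equals `(∇ê₁)ê₂`. -/
theorem gradVec_tau_rho_gyrophase_independent
    (e1 e2 : (Fin 3 → ℝ) → Fin 3 → ℝ)
    (hd1 : Differentiable ℝ e1) (hd2 : Differentiable ℝ e2)
    (h11 : ∀ r, e1 r ⬝ᵥ e1 r = 1) (h22 : ∀ r, e2 r ⬝ᵥ e2 r = 1)
    (h12 : ∀ r, e1 r ⬝ᵥ e2 r = 0)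
    (τ ρ : (Fin 3 → ℝ) → ℝ → Fin 3 → ℝ)
    (hτ : ∀ r θ, τ r θ = (-Real.sin θ) • e1 r - Real.cos θ • e2 r)
    (hρ : ∀ r θ, ρ r θ = Real.cos θ • e1 r - Real.sin θ • e2 r) :
    ∀ (r : Fin 3 → ℝ) (θ : ℝ),
      deriv (fun θ' => gradVec (fun r' => τ r' θ') r (ρ r θ')) θ = 0 ∧
      gradVec (fun r' => τ r' θ) r (ρ r θ) = gradVec e1 r (e2 r) := by
  intro r θ
  have hconst : ∀ θ', gradVec (fun r' => τ r' θ') r (ρ r θ') = gradVec e1 r (e2 r) := by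
    intro θ'
    simpa only [hτ, hρ] using gradVec_rotated_frame hd1 hd2 h11 h22 h12 r θ'
  refine ⟨?_, hconst θ⟩
  simp only [hconst, deriv_const]
end

section
/- Let b̂₀, B, w ∈ ℝ³ and m, q, B₀ ∈ ℝ with m ≠ 0, q ≠ 0, B₀ ≠ 0, and suppose B∥ := B·b̂₀ ≠ 0. Define the 6×6 block matrix (blocks of sizes 3,1,1,1) W := [[q[B], −m b̂₀, (m/q)w, 0₃], [m b̂₀ᵀ, 0, 0, 0], [−(m/q)wᵀ, 0, 0, m/q], [0₃ᵀ, 0, −m/q, 0]] and J := [[−[B₀ b̂₀]/(q B₀ B∥), B/(m B∥), 0₃, −(w × b̂₀)/(q B∥)], [−Bᵀ/(m B∥), 0, 0, −(B·w)/(m B∥)], [0₃ᵀ, 0, 0, −q/m], [(w × b̂₀)ᵀ/(q B∥), (B·w)/(m B∥), q/m, 0]]. Then W · J = I₆, i.e. J is the inverse of the guiding-centre Lagrange matrix W. -/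
open Matrix

/-- The matrix `[X]` with `[X]v = v × X`. -/
def crossMat (X : Fin 3 → ℝ) : Matrix (Fin 3) (Fin 3) ℝ :=
  Matrix.of fun i j => crossProduct (Pi.single j 1) X i

/-- The 6×6 guiding-centre Lagrange matrix `W` (blocks of sizes 3,1,1,1, the second
block index `0,1,2` standing for the `u∥, μ, θ` rows/columns). -/
noncomputable def WLagrange (m q : ℝ) (b0 B w : Fin 3 → ℝ) :
    Matrix (Fin 3 ⊕ Fin 3) (Fin 3 ⊕ Fin 3) ℝ :=
  Matrix.fromBlocks
    (q • crossMat B)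
    (Matrix.of fun i j => ![-m * b0 i, m / q * w i, 0] j)
    (Matrix.of fun i j => ![m * b0 j, -(m / q) * w j, 0] i)
    !![0, 0, 0; 0, 0, m / q; 0, -(m / q), 0]

/-- The claimed inverse (Poisson matrix) `J`. -/
noncomputable def JPoisson (m q B0 : ℝ) (b0 B w : Fin 3 → ℝ) :
    Matrix (Fin 3 ⊕ Fin 3) (Fin 3 ⊕ Fin 3) ℝ :=
  Matrix.fromBlocks
    ((-(1 / (q * B0 * (B ⬝ᵥ b0)))) • crossMat (B0 • b0))
    (Matrix.of fun i j => ![B i / (m * (B ⬝ᵥ b0)), 0,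
        -(crossProduct w b0 i) / (q * (B ⬝ᵥ b0))] j)
    (Matrix.of fun i j => ![-(B j) / (m * (B ⬝ᵥ b0)), 0,
        crossProduct w b0 j / (q * (B ⬝ᵥ b0))] i)
    !![0, 0, -(B ⬝ᵥ w) / (m * (B ⬝ᵥ b0));
       0, 0, -(q / m);
       (B ⬝ᵥ w) / (m * (B ⬝ᵥ b0)), q / m, 0]

/-! Multiply blockwise, splitting the six coordinates as 3 + 3. The spatial block is the identity
by the vector triple product `[B][b̂₀] = b̂₀ Bᵀ - (B·b̂₀) I`; the other blocks vanish or are the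
identity because of `B × B = 0`, `(w × b̂₀) × B = (w·B) b̂₀ - (B·b̂₀) w`, `b̂₀ × w = -(w × b̂₀)` and
`u · (v × u) = 0`. -/

lemma crossMat_mulVec (X v : Fin 3 → ℝ) : crossMat X *ᵥ v = v ⨯₃ X := by
  ext i
  fin_cases i <;> simp [crossMat, mulVec, dotProduct, Fin.sum_univ_three, cross_apply] <;> ring

lemma vecMul_crossMat (v X : Fin 3 → ℝ) : v ᵥ* crossMat X = X ⨯₃ v := by
  ext i
  fin_cases i <;> simp [crossMat, vecMul, dotProduct, Fin.sum_univ_three, cross_apply] <;> ring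

lemma crossMat_smul (c : ℝ) (X : Fin 3 → ℝ) : crossMat (c • X) = c • crossMat X := by
  ext i j
  simp [crossMat]

lemma crossMat_mul_crossMat (X Y : Fin 3 → ℝ) :
    crossMat X * crossMat Y = vecMulVec Y X - (X ⬝ᵥ Y) • 1 := by
  refine ext_of_mulVec_single fun j => ?_
  rw [← mulVec_mulVec, crossMat_mulVec, crossMat_mulVec, cross_cross_eq_smul_sub_smul,
    sub_mulVec, smul_mulVec, one_mulVec, vecMulVec_mulVec, op_smul_eq_smul,
    dotProduct_comm X (Pi.single j 1), dotProduct_comm Y X]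

section MatrixOfRows

variable {R k l n : Type*} [NonUnitalNonAssocSemiring R]

lemma transpose_of_mul_of [Fintype k] (u : k → l → R) (v : k → n → R) :
    (of u)ᵀ * of v = ∑ i, vecMulVec (u i) (v i) := by
  ext i j
  simp [mul_apply, vecMulVec_apply, Matrix.sum_apply]

lemma mul_transpose_of_apply [Fintype n] (M : Matrix l n R) (u : k → n → R) (i : l) (j : k) :
    (M * (of u)ᵀ) i j = (M *ᵥ u j) i := rfl

lemma of_mul_apply [Fintype n] (u : k → n → R) (M : Matrix n l R) (i : k) (j : l) :
    (of u * M) i j = (u i ᵥ* M) j := rfl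

lemma of_mul_transpose_of_apply [Fintype n] (u v : k → n → R) (i j : k) :
    (of u * (of v)ᵀ) i j = u i ⬝ᵥ v j := rfl

end MatrixOfRows

section Blocks

variable {m q B0 : ℝ} {b0 B w : Fin 3 → ℝ}

lemma WLagrange_toBlocks₁₂ :
    (WLagrange m q b0 B w).toBlocks₁₂ = (of ![-m • b0, (m / q) • w, 0])ᵀ := by
  ext i j
  fin_cases j <;> simp [WLagrange]

lemma WLagrange_toBlocks₂₁ :
    (WLagrange m q b0 B w).toBlocks₂₁ = of ![m • b0, -(m / q) • w, 0] := by
  ext i j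
  fin_cases i <;> simp [WLagrange]

lemma JPoisson_toBlocks₁₂ : (JPoisson m q B0 b0 B w).toBlocks₁₂ =
    (of ![(m * (B ⬝ᵥ b0))⁻¹ • B, 0, -(q * (B ⬝ᵥ b0))⁻¹ • (w ⨯₃ b0)])ᵀ := by
  ext i j
  fin_cases j <;> simp [JPoisson, div_eq_inv_mul]

lemma JPoisson_toBlocks₂₁ : (JPoisson m q B0 b0 B w).toBlocks₂₁ =
    of ![-(m * (B ⬝ᵥ b0))⁻¹ • B, 0, (q * (B ⬝ᵥ b0))⁻¹ • (w ⨯₃ b0)] := by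
  ext i j
  fin_cases i <;> simp [JPoisson, div_eq_inv_mul]

lemma WLagrange_mul_JPoisson_block₁₁ (hm : m ≠ 0) (hq : q ≠ 0) (hB0 : B0 ≠ 0)
    (hBpar : B ⬝ᵥ b0 ≠ 0) :
    (WLagrange m q b0 B w).toBlocks₁₁ * (JPoisson m q B0 b0 B w).toBlocks₁₁ +
      (WLagrange m q b0 B w).toBlocks₁₂ * (JPoisson m q B0 b0 B w).toBlocks₂₁ = 1 := by
  rw [WLagrange_toBlocks₁₂, JPoisson_toBlocks₂₁]
  simp only [WLagrange, JPoisson, toBlocks_fromBlocks₁₁, crossMat_smul, smul_mul_smul_comm,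
    Matrix.mul_smul, crossMat_mul_crossMat, transpose_of_mul_of]
  simp only [Fin.sum_univ_three, cons_val_zero, cons_val_one, cons_val, vecMulVec_neg,
    neg_vecMulVec, vecMulVec_smul, smul_vecMulVec, vecMulVec_zero, zero_vecMulVec, smul_smul,
    neg_smul, smul_neg, neg_neg, smul_zero, add_zero]
  match_scalars <;> field_simp
  ring

lemma WLagrange_mul_JPoisson_block₁₂ (hm : m ≠ 0) (hq : q ≠ 0) (hBpar : B ⬝ᵥ b0 ≠ 0) :
    (WLagrange m q b0 B w).toBlocks₁₁ * (JPoisson m q B0 b0 B w).toBlocks₁₂ +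
      (WLagrange m q b0 B w).toBlocks₁₂ * (JPoisson m q B0 b0 B w).toBlocks₂₂ = 0 := by
  rw [WLagrange_toBlocks₁₂, JPoisson_toBlocks₁₂]
  ext i j
  rw [Matrix.add_apply, mul_transpose_of_apply]
  fin_cases j <;> simp [WLagrange, JPoisson, smul_mulVec, mulVec_neg, mulVec_smul,
    crossMat_mulVec, cross_cross_eq_smul_sub_smul, mul_apply, Fin.sum_univ_three]
  rw [dotProduct_comm w B, dotProduct_comm b0 B]
  field_simp
  ring

lemma WLagrange_mul_JPoisson_block₂₁ (hq : q ≠ 0) (hB0 : B0 ≠ 0) (hBpar : B ⬝ᵥ b0 ≠ 0) :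
    (WLagrange m q b0 B w).toBlocks₂₁ * (JPoisson m q B0 b0 B w).toBlocks₁₁ +
      (WLagrange m q b0 B w).toBlocks₂₂ * (JPoisson m q B0 b0 B w).toBlocks₂₁ = 0 := by
  rw [WLagrange_toBlocks₂₁, JPoisson_toBlocks₂₁]
  ext i j
  rw [Matrix.add_apply, of_mul_apply]
  fin_cases i <;> simp [WLagrange, JPoisson, vecMul_neg, neg_vecMul, vecMul_smul, smul_vecMul,
    crossMat_smul, vecMul_crossMat, mul_apply, Fin.sum_univ_three]
  rw [← cross_anticomm b0 w, Pi.neg_apply]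
  field_simp
  ring

lemma WLagrange_mul_JPoisson_block₂₂ (hm : m ≠ 0) (hq : q ≠ 0) (hBpar : B ⬝ᵥ b0 ≠ 0) :
    (WLagrange m q b0 B w).toBlocks₂₁ * (JPoisson m q B0 b0 B w).toBlocks₁₂ +
      (WLagrange m q b0 B w).toBlocks₂₂ * (JPoisson m q B0 b0 B w).toBlocks₂₂ = 1 := by
  rw [WLagrange_toBlocks₂₁, JPoisson_toBlocks₁₂]
  ext i j
  rw [Matrix.add_apply, of_mul_transpose_of_apply]
  fin_cases i <;> fin_cases j <;>
    simp [WLagrange, JPoisson, mul_apply, Fin.sum_univ_three, one_apply,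
      dotProduct_comm b0 B, dotProduct_comm w B] <;>
    field_simp
  ring

end Blocks

/-- `J` is the inverse of the guiding-centre Lagrange matrix `W`. -/
theorem lagrange_matrix_inverse (m q B0 : ℝ) (hm : m ≠ 0) (hq : q ≠ 0) (hB0 : B0 ≠ 0)
    (b0 B w : Fin 3 → ℝ) (hBpar : B ⬝ᵥ b0 ≠ 0) :
    WLagrange m q b0 B w * JPoisson m q B0 b0 B w = 1 := by
  rw [← fromBlocks_toBlocks (WLagrange m q b0 B w), ← fromBlocks_toBlocks (JPoisson m q B0 b0 B w),
    fromBlocks_multiply, ← fromBlocks_one, fromBlocks_inj]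
  exact ⟨WLagrange_mul_JPoisson_block₁₁ hm hq hB0 hBpar, WLagrange_mul_JPoisson_block₁₂ hm hq hBpar,
    WLagrange_mul_JPoisson_block₂₁ hq hB0 hBpar, WLagrange_mul_JPoisson_block₂₂ hm hq hBpar⟩
end

section
/- For all vectors B, b̂₀ ∈ ℝ³ and all real numbers m, q, the 4×4 block matrix [[q[B], −m b̂₀], [m b̂₀ᵀ, 0]] (with 3×3 top-left block, 3×1 and 1×3 off-diagonal blocks, and scalar bottom-right entry) has determinant q² m² (B·b̂₀)². -/
/-!
Bordering a 3×3 matrix `A` by a column `u`, a row `vᵀ` and a zero corner gives a determinant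
`-vᵀ (adj A) u`. The adjugate of the skew-symmetric matrix `[B]` is the rank-one matrix `B Bᵀ`
(`[B] adj [B] = det [B] = 0` puts its columns in the kernel of `[B]`, spanned by `B`), so for
`A = q[B]`, `u = -m b̂₀`, `v = m b̂₀` the determinant is `q² m² (B·b̂₀)²`.
-/

open Matrix

theorem det_fromBlocks_replicateCol_replicateRow_zero_fin_three {R : Type*} [CommRing R]
    (A : Matrix (Fin 3) (Fin 3) R) (u v : Fin 3 → R) :
    (fromBlocks A (replicateCol (Fin 1) u) (replicateRow (Fin 1) v) 0).det
      = -(v ⬝ᵥ adjugate A *ᵥ u) := by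
  rw [← det_reindex_self finSumFinEquiv, det_succ_row_zero]
  simp [Fin.sum_univ_succ, det_fin_three, adjugate_fin_three, dotProduct, mulVec, Fin.succAbove,
    finSumFinEquiv, Fin.addCases, Fin.castLT, Fin.subNat]
  ring

theorem adjugate_crossMat (X : Fin 3 → ℝ) : adjugate (crossMat X) = vecMulVec X X := by
  ext i j
  fin_cases i <;> fin_cases j <;>
    simp [adjugate_fin_three, crossMat, crossProduct, vecMulVec] <;> ring

/-- `det [[q[B], −m b̂₀], [m b̂₀ᵀ, 0]] = q² m² (B·b̂₀)²`. -/
theorem det_W11_block (B b0 : Fin 3 → ℝ) (m q : ℝ) :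
    (Matrix.fromBlocks (q • crossMat B)
      (Matrix.of fun i (_ : Fin 1) => -m * b0 i)
      (Matrix.of fun (_ : Fin 1) j => m * b0 j)
      (0 : Matrix (Fin 1) (Fin 1) ℝ)).det
    = q ^ 2 * m ^ 2 * (B ⬝ᵥ b0) ^ 2 := by
  change (fromBlocks (q • crossMat B) (replicateCol (Fin 1) (-m • b0))
    (replicateRow (Fin 1) (m • b0)) 0).det = _
  rw [det_fromBlocks_replicateCol_replicateRow_zero_fin_three, adjugate_smul, adjugate_crossMat,
    smul_mulVec, vecMulVec_mulVec]
  simp only [Fintype.card_fin, dotProduct_smul, smul_dotProduct, smul_eq_mul,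
    MulOpposite.smul_eq_mul_unop, MulOpposite.unop_op, dotProduct_comm b0 B]
  ring
end

section
/- Let b̂₀ : ℝ³ → ℝ³ be a continuously differentiable vector field with |b̂₀(r)| = 1 for all r, and let Q : ℝ³ → ℝ be continuously differentiable. Then at every point, Q (∇×b̂₀)_⊥ = b̂₀ × [∇·(Q b̂₀⊗b̂₀)], where (∇×b̂₀)_⊥ := (∇×b̂₀) − ((∇×b̂₀)·b̂₀) b̂₀ and the divergence of a matrix field M is the vector field with components (∇·M)_j = Σᵢ ∂ᵢ M_{ij}. -/
/-!
By the product rule, `∇·(Q b⊗b) = (∇·(Q b)) b + Q J b` with `J = (∂ⱼ bᵢ)` the Jacobian, and the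
first term is killed by `b × ·`. As `∇×b` is the axial vector of `J - Jᵀ`, we have
`J b = Jᵀ b + (∇×b) × b`; differentiating `|b|² = 1` gives `Jᵀ b = 0`, and the BAC–CAB rule
turns `b × ((∇×b) × b)` into `(∇×b) - ((∇×b)·b) b`.
-/

open Matrix

/-- The partial derivative `∂f/∂rᵢ`. -/
noncomputable def pd (i : Fin 3) (f : (Fin 3 → ℝ) → ℝ) (r : Fin 3 → ℝ) : ℝ :=
  fderiv ℝ f r (Pi.single i 1)

/-- The curl `∇ × F` of a vector field on ℝ³. -/
noncomputable def curl (F : (Fin 3 → ℝ) → Fin 3 → ℝ) (r : Fin 3 → ℝ) : Fin 3 → ℝ :=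
  ![pd 1 (fun x => F x 2) r - pd 2 (fun x => F x 1) r,
    pd 2 (fun x => F x 0) r - pd 0 (fun x => F x 2) r,
    pd 0 (fun x => F x 1) r - pd 1 (fun x => F x 0) r]

/-- The divergence of a matrix field, `(∇·M)_j = ∑ᵢ ∂ᵢ M_{ij}`. -/
noncomputable def matDiv (M : (Fin 3 → ℝ) → Matrix (Fin 3) (Fin 3) ℝ)
    (r : Fin 3 → ℝ) : Fin 3 → ℝ :=
  fun j => ∑ i, pd i (fun x => M x i j) r

section PartialDerivative

variable {i : Fin 3} {r : Fin 3 → ℝ}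

lemma pd_mul {f g : (Fin 3 → ℝ) → ℝ} (hf : DifferentiableAt ℝ f r)
    (hg : DifferentiableAt ℝ g r) :
    pd i (fun x => f x * g x) r = pd i f r * g r + f r * pd i g r := by
  simp only [pd, fderiv_fun_mul hf hg, _root_.add_apply, _root_.smul_apply,
    smul_eq_mul]
  ring

lemma pd_sum {ι : Type*} (s : Finset ι) {f : ι → (Fin 3 → ℝ) → ℝ}
    (hf : ∀ k ∈ s, DifferentiableAt ℝ (f k) r) :
    pd i (fun x => ∑ k ∈ s, f k x) r = ∑ k ∈ s, pd i (f k) r := by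
  simp only [pd, fderiv_fun_sum hf, FunLike.coe_sum, Finset.sum_apply]

lemma pd_const (c : ℝ) : pd i (fun _ => c) r = 0 := by
  simp [pd]

end PartialDerivative

noncomputable def jacobian (F : (Fin 3 → ℝ) → Fin 3 → ℝ) (r : Fin 3 → ℝ) :
    Matrix (Fin 3) (Fin 3) ℝ :=
  Matrix.of fun i j => pd j (fun x => F x i) r

/-- Twice the axial vector of the antisymmetric part of `A`. -/
def axialVec (A : Matrix (Fin 3) (Fin 3) ℝ) : Fin 3 → ℝ :=
  ![A 2 1 - A 1 2, A 0 2 - A 2 0, A 1 0 - A 0 1]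

lemma curl_eq_axialVec_jacobian (F : (Fin 3 → ℝ) → Fin 3 → ℝ) (r : Fin 3 → ℝ) :
    curl F r = axialVec (jacobian F r) :=
  rfl

lemma mulVec_eq_vecMul_add_axialVec_cross (A : Matrix (Fin 3) (Fin 3) ℝ) (v : Fin 3 → ℝ) :
    A *ᵥ v = v ᵥ* A + axialVec A ⨯₃ v := by
  ext k
  fin_cases k <;>
    simp [mulVec, vecMul, dotProduct, Fin.sum_univ_three, cross_apply, axialVec] <;> ring

lemma vecMul_jacobian_eq_zero {F : (Fin 3 → ℝ) → Fin 3 → ℝ} {c : ℝ}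
    (hF : ∀ x, F x ⬝ᵥ F x = c) {r : Fin 3 → ℝ} (hFr : DifferentiableAt ℝ F r) :
    F r ᵥ* jacobian F r = 0 := by
  have hcomp : ∀ k, DifferentiableAt ℝ (fun x => F x k) r := differentiableAt_pi.1 hFr
  ext i
  have hconst : pd i (fun x => ∑ k, F x k * F x k) r = 0 := by
    rw [show (fun x => ∑ k, F x k * F x k) = fun _ => c from funext hF]
    exact pd_const c
  rw [pd_sum (f := fun k x => F x k * F x k) _ fun k _ => (hcomp k).mul (hcomp k)] at hconst
  simp only [pd_mul (hcomp _) (hcomp _), Fin.sum_univ_three] at hconst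
  simp only [vecMul, dotProduct, jacobian, Matrix.of_apply, Pi.zero_apply, Fin.sum_univ_three]
  linear_combination hconst / 2

lemma matDiv_smul_vecMulVec_self {Q : (Fin 3 → ℝ) → ℝ} {F : (Fin 3 → ℝ) → Fin 3 → ℝ}
    {r : Fin 3 → ℝ} (hQ : DifferentiableAt ℝ Q r) (hF : DifferentiableAt ℝ F r) :
    matDiv (fun x => Q x • vecMulVec (F x) (F x)) r
      = (∑ i, pd i (fun x => Q x * F x i) r) • F r + Q r • (jacobian F r *ᵥ F r) := by
  have hcomp : ∀ k, DifferentiableAt ℝ (fun x => F x k) r := differentiableAt_pi.1 hF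
  ext j
  simp only [matDiv, smul_eq_mul, Pi.add_apply, Pi.smul_apply,
    mulVec, dotProduct, jacobian, Matrix.of_apply, Finset.sum_mul, Finset.mul_sum,
    ← Finset.sum_add_distrib]
  refine Finset.sum_congr rfl fun i _ => ?_
  rw [show (fun x => (Q x • vecMulVec (F x) (F x)) i j) = fun x => (Q x * F x i) * F x j by
      funext x; simp only [Matrix.smul_apply, vecMulVec_apply, smul_eq_mul]; ring,
    pd_mul (f := fun x => Q x * F x i) (hQ.mul (hcomp i)) (hcomp j)]
  ring

/-- for a unit vector field `b̂₀` and scalar field `Q`,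
`Q (∇×b̂₀)_⊥ = b̂₀ × [∇·(Q b̂₀⊗b̂₀)]`. -/
theorem perp_curl_eq_cross_div_outer
    (b : (Fin 3 → ℝ) → Fin 3 → ℝ) (hb : ContDiff ℝ 1 b)
    (hunit : ∀ r, b r ⬝ᵥ b r = 1)
    (Q : (Fin 3 → ℝ) → ℝ) (hQ : ContDiff ℝ 1 Q) :
    ∀ r : Fin 3 → ℝ,
      Q r • (curl b r - (curl b r ⬝ᵥ b r) • b r)
      = crossProduct (b r) (matDiv (fun x => Q x • vecMulVec (b x) (b x)) r) := by
  intro r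
  have hbr : DifferentiableAt ℝ b r := hb.differentiable one_ne_zero r
  have hQr : DifferentiableAt ℝ Q r := hQ.differentiable one_ne_zero r
  have hadvect : jacobian b r *ᵥ b r = curl b r ⨯₃ b r := by
    rw [mulVec_eq_vecMul_add_axialVec_cross, vecMul_jacobian_eq_zero hunit hbr, zero_add,
      curl_eq_axialVec_jacobian]
  calc Q r • (curl b r - (curl b r ⬝ᵥ b r) • b r)
      = Q r • (b r ⨯₃ (curl b r ⨯₃ b r)) := by
        rw [cross_cross_eq_smul_sub_smul', hunit, one_smul, dotProduct_comm]
    _ = Q r • (b r ⨯₃ (jacobian b r *ᵥ b r)) := by rw [hadvect]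
    _ = b r ⨯₃ matDiv (fun x => Q x • vecMulVec (b x) (b x)) r := by
        rw [matDiv_smul_vecMulVec_self hQr hbr, map_add, map_smul, map_smul, cross_self,
          smul_zero, zero_add]
end

section
/- Let g : ℝ³ × ℝ × ℝ × ℝ → ℝ, (r, u∥, μ, t) ↦ g(r, u∥, μ, t), be continuously differentiable and compactly supported, and let V : ℝ³ × ℝ × ℝ × ℝ → ℝ³ and a : ℝ³ × ℝ × ℝ × ℝ → ℝ be continuously differentiable. If the conservative transport (Vlasov) equation ∂_t g + ∇_r·(g V) + ∂_{u∥}(g a) = 0 holds at every point, then the velocity moments ϱ(r, t) := ∫∫ g(r, u∥, μ, t) du∥ dμ and 𝒥(r, t) := ∫∫ g(r, u∥, μ, t) V(r, u∥, μ, t) du∥ dμ satisfy the continuity equation ∂_t ϱ + ∇·𝒥 = 0 at every (r, t). -/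
open Matrix MeasureTheory

/-- The divergence `∇·F` of a vector field on ℝ³. -/
noncomputable def divg (F : (Fin 3 → ℝ) → Fin 3 → ℝ) (r : Fin 3 → ℝ) : ℝ :=
  ∑ i, pd i (fun x => F x i) r

/-! Integrate the Vlasov equation over `(u∥, μ)`. Because `g` is `C¹` with compact support, the
partial derivatives of the integrands are continuous with compact support, hence dominated by a
constant times the indicator of a compact set of velocities; so `∂_t` and `∇_r·` commute with the
velocity integral. The `∂_{u∥}(g a)` term integrates to zero: by Fubini, on each line `μ = const`
it is the integral of the derivative of a compactly supported function. -/

open Function Set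

theorem HasCompactSupport.comp_leftInverse {X Y M : Type*} [TopologicalSpace X]
    [TopologicalSpace Y] [T2Space Y] [Zero M] {g : Y → M} (hg : HasCompactSupport g) {e : X → Y}
    {π : Y → X} (h : LeftInverse π e) (hπ : Continuous π) (he : Continuous e) :
    HasCompactSupport (g ∘ e) :=
  hg.comp_isClosedEmbedding (h.isClosedEmbedding hπ he)

section PartialFDeriv

variable {H P E : Type*} [NormedAddCommGroup H] [NormedSpace ℝ H] [NormedAddCommGroup P]
  [NormedSpace ℝ P] [NormedAddCommGroup E] [NormedSpace ℝ E] {f : H × P → E}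

theorem fderiv_slice_eq (hf : Differentiable ℝ f) (x : H) (p : P) :
    fderiv ℝ (fun x' => f (x', p)) x = (fderiv ℝ f (x, p)).comp (ContinuousLinearMap.inl ℝ H P) :=
  ((hf (x, p)).hasFDerivAt.comp x (hasFDerivAt_prodMk_left x p)).fderiv

theorem ContDiff.continuous_fderiv_slice (hf : ContDiff ℝ 1 f) :
    Continuous fun q : H × P => fderiv ℝ (fun x => f (x, q.2)) q.1 := by
  simp only [fderiv_slice_eq (hf.differentiable one_ne_zero)]
  exact (hf.continuous_fderiv one_ne_zero).clm_comp continuous_const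

theorem HasCompactSupport.fderiv_slice (hf : HasCompactSupport f) (hd : Differentiable ℝ f) :
    HasCompactSupport fun q : H × P => fderiv ℝ (fun x => f (x, q.2)) q.1 := by
  simp only [fderiv_slice_eq hd]
  exact (hf.fderiv ℝ).comp_left (g := fun L => L.comp (ContinuousLinearMap.inl ℝ H P))
    (ContinuousLinearMap.zero_comp _)

end PartialFDeriv

section ParametricIntegral

variable {H P E F : Type*} [NormedAddCommGroup H] [NormedAddCommGroup P] [NormedAddCommGroup E]
  [NormedAddCommGroup F] [MeasurableSpace P] [BorelSpace P]
  (μ : Measure P) [IsFiniteMeasureOnCompacts μ]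

theorem HasCompactSupport.integrable_slice {Φ : H × P → F} (hΦ : HasCompactSupport Φ)
    (hc : Continuous Φ) (x : H) : Integrable (fun p => Φ (x, p)) μ :=
  (hc.comp (Continuous.prodMk_right x)).integrable_of_hasCompactSupport
    (hΦ.comp_leftInverse (π := Prod.snd) (fun _ => rfl) continuous_snd
      (Continuous.prodMk_right x))

theorem HasCompactSupport.exists_integrable_bound_slice {Φ : H × P → F}
    (hΦ : HasCompactSupport Φ) (hc : Continuous Φ) :
    ∃ bound : P → ℝ, Integrable bound μ ∧ ∀ x p, ‖Φ (x, p)‖ ≤ bound p := by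
  obtain ⟨C, hC⟩ := hΦ.exists_bound_of_continuous hc
  have hK : IsCompact (Prod.snd '' tsupport Φ) := hΦ.image continuous_snd
  refine ⟨(Prod.snd '' tsupport Φ).indicator fun _ => C,
    (integrable_indicator_iff hK.measurableSet).2 (integrableOn_const hK.measure_lt_top.ne),
    fun x p => ?_⟩
  by_cases hp : p ∈ Prod.snd '' tsupport Φ
  · simpa [indicator_of_mem hp] using hC (x, p)
  · rw [indicator_of_notMem hp,
      image_eq_zero_of_notMem_tsupport fun h => hp ⟨(x, p), h, rfl⟩, norm_zero]

variable [NormedSpace ℝ H] [NormedSpace ℝ P] [NormedSpace ℝ E] {f : H × P → E}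

theorem hasFDerivAt_integral_of_contDiff_of_hasCompactSupport (hf : ContDiff ℝ 1 f)
    (hs : HasCompactSupport f) (x₀ : H) :
    HasFDerivAt (fun x => ∫ p, f (x, p) ∂μ) (∫ p, fderiv ℝ (fun x => f (x, p)) x₀ ∂μ) x₀ := by
  have hd := hf.differentiable one_ne_zero
  have hΦ := hs.fderiv_slice hd
  obtain ⟨bound, hbound, hle⟩ := hΦ.exists_integrable_bound_slice μ hf.continuous_fderiv_slice
  exact hasFDerivAt_integral_of_dominated_of_fderiv_le Filter.univ_mem
    (.of_forall fun x => (hs.integrable_slice μ hf.continuous x).aestronglyMeasurable)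
    (hs.integrable_slice μ hf.continuous x₀)
    (hΦ.integrable_slice μ hf.continuous_fderiv_slice x₀).aestronglyMeasurable
    (.of_forall fun p x _ => hle x p) hbound
    (.of_forall fun p x _ => (hd.comp (differentiable_id.prodMk (differentiable_const p))
      x).hasFDerivAt)

theorem integrable_fderiv_slice (hf : ContDiff ℝ 1 f) (hs : HasCompactSupport f) (x₀ : H) :
    Integrable (fun p => fderiv ℝ (fun x => f (x, p)) x₀) μ :=
  (hs.fderiv_slice (hf.differentiable one_ne_zero)).integrable_slice μ
    hf.continuous_fderiv_slice x₀

theorem integrable_fderiv_slice_apply (hf : ContDiff ℝ 1 f) (hs : HasCompactSupport f)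
    (x₀ v : H) : Integrable (fun p => fderiv ℝ (fun x => f (x, p)) x₀ v) μ :=
  (ContinuousLinearMap.apply ℝ E v).integrable_comp (integrable_fderiv_slice μ hf hs x₀)

theorem fderiv_integral_apply_of_contDiff_of_hasCompactSupport (hf : ContDiff ℝ 1 f)
    (hs : HasCompactSupport f) (x₀ v : H) :
    fderiv ℝ (fun x => ∫ p, f (x, p) ∂μ) x₀ v = ∫ p, fderiv ℝ (fun x => f (x, p)) x₀ v ∂μ := by
  rw [(hasFDerivAt_integral_of_contDiff_of_hasCompactSupport μ hf hs x₀).fderiv,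
    ContinuousLinearMap.integral_apply (integrable_fderiv_slice μ hf hs x₀)]

theorem deriv_integral_of_contDiff_of_hasCompactSupport {f : ℝ × P → E} (hf : ContDiff ℝ 1 f)
    (hs : HasCompactSupport f) (s₀ : ℝ) :
    deriv (fun s => ∫ p, f (s, p) ∂μ) s₀ = ∫ p, deriv (fun s => f (s, p)) s₀ ∂μ := by
  simpa only [fderiv_apply_one_eq_deriv] using
    fderiv_integral_apply_of_contDiff_of_hasCompactSupport μ hf hs s₀ 1

theorem integrable_deriv_slice {f : ℝ × P → E} (hf : ContDiff ℝ 1 f) (hs : HasCompactSupport f)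
    (s₀ : ℝ) : Integrable (fun p => deriv (fun s => f (s, p)) s₀) μ := by
  simpa only [fderiv_apply_one_eq_deriv] using integrable_fderiv_slice_apply μ hf hs s₀ 1

end ParametricIntegral

section Divergence

variable {P : Type*} [NormedAddCommGroup P] [NormedSpace ℝ P] [MeasurableSpace P] [BorelSpace P]
  (μ : Measure P) [IsFiniteMeasureOnCompacts μ] {F : (Fin 3 → ℝ) × P → Fin 3 → ℝ}

theorem integrable_divg_slice (hF : ContDiff ℝ 1 F) (hs : HasCompactSupport F) (r : Fin 3 → ℝ) :
    Integrable (fun p => divg (fun x => F (x, p)) r) μ :=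
  integrable_finsetSum _ fun i _ => integrable_fderiv_slice_apply μ (contDiff_pi.1 hF i)
    (hs.comp_left (g := fun v : Fin 3 → ℝ => v i) rfl) r (Pi.single i 1)

theorem divg_integral_of_contDiff_of_hasCompactSupport (hF : ContDiff ℝ 1 F)
    (hs : HasCompactSupport F) (r : Fin 3 → ℝ) :
    divg (fun x => ∫ p, F (x, p) ∂μ) r = ∫ p, divg (fun x => F (x, p)) r ∂μ := by
  have hFi : ∀ i, ContDiff ℝ 1 fun q => F q i := contDiff_pi.1 hF
  have hsi : ∀ i, HasCompactSupport fun q => F q i := fun i =>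
    hs.comp_left (g := fun v : Fin 3 → ℝ => v i) rfl
  have heval : ∀ i, (fun x => (∫ p, F (x, p) ∂μ) i) = fun x => ∫ p, F (x, p) i ∂μ := fun i =>
    funext fun x => eval_integral (fun j => (hsi j).integrable_slice μ (hFi j).continuous x) i
  simp only [divg, pd, heval]
  rw [integral_finsetSum _ fun i _ =>
    integrable_fderiv_slice_apply μ (hFi i) (hsi i) r (Pi.single i 1)]
  exact Finset.sum_congr rfl fun i _ =>
    fderiv_integral_apply_of_contDiff_of_hasCompactSupport μ (hFi i) (hsi i) r (Pi.single i 1)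

end Divergence

theorem integral_deriv_fst_eq_zero {P E : Type*} [NormedAddCommGroup P] [NormedSpace ℝ P]
    [MeasurableSpace P] [BorelSpace P] [NormedAddCommGroup E] [NormedSpace ℝ E] {ν : Measure P} [SFinite ν] [IsFiniteMeasureOnCompacts ν] {h : ℝ × P → E}
    (hh : ContDiff ℝ 1 h) (hs : HasCompactSupport h) :
    ∫ q, deriv (fun u => h (u, q.2)) q.1 ∂(volume.prod ν) = 0 := by
  have hint : Integrable (fun q => deriv (fun u => h (u, q.2)) q.1) (volume.prod ν) := by
    simp only [← fderiv_apply_one_eq_deriv]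
    exact (hh.continuous_fderiv_slice.clm_apply continuous_const).integrable_of_hasCompactSupport
      ((hs.fderiv_slice (hh.differentiable one_ne_zero)).comp_left
        (g := fun L : ℝ →L[ℝ] E => L 1) rfl)
  rw [integral_prod_symm _ hint]
  refine integral_eq_zero_of_ae (.of_forall fun y => ?_)
  have hφ : ContDiff ℝ 1 fun u => h (u, y) := hh.comp (contDiff_id.prodMk contDiff_const)
  have hφs : HasCompactSupport fun u => h (u, y) :=
    hs.comp_leftInverse (π := Prod.fst) (fun _ => rfl) continuous_fst (Continuous.prodMk_left y)
  exact integral_eq_zero_of_hasDerivAt_of_integrable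
    (fun u => ((hφ.differentiable one_ne_zero) u).hasDerivAt)
    ((hφ.continuous_deriv le_rfl).integrable_of_hasCompactSupport hφs.deriv)
    (hφ.continuous.integrable_of_hasCompactSupport hφs)

/-- if `g` satisfies the conservative transport (Vlasov) equation, its
velocity moments `ϱ = ∫∫ g` and `𝒥 = ∫∫ g V` satisfy the continuity equation
`∂_t ϱ + ∇·𝒥 = 0`. -/
theorem moments_continuity_equation
    (g : (Fin 3 → ℝ) × ℝ × ℝ × ℝ → ℝ)
    (hg : ContDiff ℝ 1 g) (hgsupp : HasCompactSupport g)
    (V : (Fin 3 → ℝ) × ℝ × ℝ × ℝ → Fin 3 → ℝ) (hV : ContDiff ℝ 1 V)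
    (a : (Fin 3 → ℝ) × ℝ × ℝ × ℝ → ℝ) (ha : ContDiff ℝ 1 a)
    (hvlasov : ∀ (r : Fin 3 → ℝ) (u μ t : ℝ),
      deriv (fun t' => g (r, u, μ, t')) t
      + divg (fun x => g (x, u, μ, t) • V (x, u, μ, t)) r
      + deriv (fun u' => g (r, u', μ, t) * a (r, u', μ, t)) u = 0) :
    ∀ (r : Fin 3 → ℝ) (t : ℝ),
      deriv (fun t' => ∫ p : ℝ × ℝ, g (r, p.1, p.2, t')) t
      + divg (fun x => ∫ p : ℝ × ℝ, g (x, p.1, p.2, t) • V (x, p.1, p.2, t)) r = 0 := by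
  intro r t
  have hdens : ContDiff ℝ 1 fun q : ℝ × ℝ × ℝ => g (r, q.2.1, q.2.2, q.1) := hg.comp (by fun_prop)
  have hdens_supp : HasCompactSupport fun q : ℝ × ℝ × ℝ => g (r, q.2.1, q.2.2, q.1) :=
    hgsupp.comp_leftInverse (π := fun y => (y.2.2.2, y.2.1, y.2.2.1)) (fun _ => rfl)
      (by fun_prop) (by fun_prop)
  have hflux : ContDiff ℝ 1 fun q : (Fin 3 → ℝ) × ℝ × ℝ =>
      g (q.1, q.2.1, q.2.2, t) • V (q.1, q.2.1, q.2.2, t) :=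
    (hg.comp (by fun_prop)).smul (hV.comp (by fun_prop))
  have hflux_supp : HasCompactSupport fun q : (Fin 3 → ℝ) × ℝ × ℝ =>
      g (q.1, q.2.1, q.2.2, t) • V (q.1, q.2.1, q.2.2, t) :=
    (hgsupp.comp_leftInverse (π := fun y => (y.1, y.2.1, y.2.2.1)) (fun _ => rfl)
      (by fun_prop) (by fun_prop)).smul_right
  have haccel : ContDiff ℝ 1 fun q : ℝ × ℝ => g (r, q.1, q.2, t) * a (r, q.1, q.2, t) :=
    (hg.comp (by fun_prop)).mul (ha.comp (by fun_prop))
  have haccel_supp : HasCompactSupport fun q : ℝ × ℝ => g (r, q.1, q.2, t) * a (r, q.1, q.2, t) :=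
    (hgsupp.comp_leftInverse (π := fun y => (y.2.1, y.2.2.1)) (fun _ => rfl)
      (by fun_prop) (by fun_prop)).mul_right
  have hpointwise : ∀ p : ℝ × ℝ,
      deriv (fun t' => g (r, p.1, p.2, t')) t
        + divg (fun x => g (x, p.1, p.2, t) • V (x, p.1, p.2, t)) r
      = -deriv (fun u => g (r, u, p.2, t) * a (r, u, p.2, t)) p.1 := fun p =>
    eq_neg_of_add_eq_zero_left (hvlasov r p.1 p.2 t)
  rw [deriv_integral_of_contDiff_of_hasCompactSupport volume hdens hdens_supp,
    divg_integral_of_contDiff_of_hasCompactSupport volume hflux hflux_supp,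
    ← integral_add (integrable_deriv_slice volume hdens hdens_supp t)
      (integrable_divg_slice volume hflux hflux_supp r),
    integral_congr_ae (.of_forall hpointwise), integral_neg, Measure.volume_eq_prod,
    integral_deriv_fst_eq_zero haccel haccel_supp, neg_zero]
end
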